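/- arXiv:1206.2260 — 6 statements merged into one kernel-verified Lean document; each statement's English description precedes it below -/
import Mathlib

section
/- Let M be a matrix over F_q with columns indexed by E, and let e be a column that is neither a loop (zero column) nor a coloop (contained in every maximal independent set of columns). Define g_M(q) to be the number of vectors y in ker(M) over F_q with supp(y) = E. Then g_M(q) = g_{M/e}(q) - g_{M-e}(q), where M-e deletes the column e and M/e is the image of the remaining columns in the quotient space by the span of e. -/
/-!
Erasing the coordinate `e` maps the kernel vectors of `M` that are nonzero off `e` bijectively
onto the full-support kernel vectors of `M/e`: as column `e` is nonzero, the erased coordinate is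
recovered as the coefficient `c` in `M y = c • column e`. Those kernel vectors of `M` split
according to whether `y e = 0` into the full-support kernel vectors of `M - e` and of `M`.
-/

open Function Submodule

namespace LinearMap

variable {K V E : Type*} [Ring K] [AddCommGroup V] [Module K V]
  (L : (E → K) →ₗ[K] V) (e : E)

def fullSupportKer : Set (E → K) := {y | L y = 0 ∧ ∀ f, y f ≠ 0}

def kerNonzeroOff : Set (E → K) := {y | L y = 0 ∧ ∀ f, f ≠ e → y f ≠ 0}

def deletionFullSupportKer : Set (E → K) := {y | y e = 0 ∧ L y = 0 ∧ ∀ f, f ≠ e → y f ≠ 0}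

theorem kerNonzeroOff_eq_union :
    L.kerNonzeroOff e = L.fullSupportKer ∪ L.deletionFullSupportKer e := by
  ext y
  simp only [kerNonzeroOff, fullSupportKer, deletionFullSupportKer, Set.mem_union,
    Set.mem_ofPred_eq]
  by_cases hy : y e = 0
  · have : ¬ ∀ f, y f ≠ 0 := fun h => h e hy
    tauto
  · have : (∀ f, y f ≠ 0) ↔ ∀ f, f ≠ e → y f ≠ 0 :=
      ⟨fun h f _ => h f, fun h f => by rcases eq_or_ne f e with rfl | hf <;> tauto⟩
    tauto

theorem disjoint_fullSupportKer_deletionFullSupportKer :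
    Disjoint L.fullSupportKer (L.deletionFullSupportKer e) :=
  Set.disjoint_left.mpr fun _ hF hD => hF.2 e hD.1

variable [DecidableEq E]

def contractionFullSupportKer : Set (E → K) :=
  {y | y e = 0 ∧ L y ∈ span K {L (Pi.single e 1)} ∧ ∀ f, f ≠ e → y f ≠ 0}

theorem map_update_eq_add_smul (y : E → K) (a : K) :
    L (update y e a) = L y + (a - y e) • L (Pi.single e 1) := by
  rw [Pi.update_eq_sub_add_single, sub_add_eq_add_sub, map_sub, map_add, add_sub_assoc,
    ← map_sub, ← Pi.single_sub, ← map_smul, ← Pi.single_smul', smul_eq_mul, mul_one]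

variable [IsCancelMulZero K] [Module.IsTorsionFree K V]

theorem bijOn_update_kerNonzeroOff_contractionFullSupportKer (he : L (Pi.single e 1) ≠ 0) :
    Set.BijOn (update · e 0) (L.kerNonzeroOff e) (L.contractionFullSupportKer e) := by
  refine ⟨?mapsTo, ?injOn, ?surjOn⟩
  case mapsTo =>
    rintro y ⟨hker, hy⟩
    refine ⟨update_self e 0 y, ?_, fun f hf => by simpa [update_of_ne hf] using hy f hf⟩
    rw [map_update_eq_add_smul, hker, zero_add]
    exact smul_mem _ _ (mem_span_singleton_self _)
  case injOn =>
    intro y ⟨hy, _⟩ y' ⟨hy', _⟩ hyy'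
    have hL := congrArg L hyy'
    simp only [map_update_eq_add_smul, hy, hy', zero_add, zero_sub, neg_smul, neg_inj] at hL
    have he' : y e = y' e := smul_left_injective K he hL
    calc y = update (update y e 0) e (y e) := by simp
      _ = update (update y' e 0) e (y' e) := by
        rw [show update y e 0 = update y' e 0 from hyy', he']
      _ = y' := by simp
  case surjOn =>
    rintro z ⟨hz, hspan, hnz⟩
    obtain ⟨c, hc⟩ := mem_span_singleton.mp hspan
    refine ⟨update z e (-c), ⟨?_, fun f hf => by simpa [update_of_ne hf] using hnz f hf⟩, ?_⟩
    · rw [map_update_eq_add_smul, hz, ← hc, sub_zero, neg_smul, add_neg_cancel]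
    · simp only [update_idem, ← hz, update_eq_self]

theorem card_contractionFullSupportKer [Finite K] [Finite E] (he : L (Pi.single e 1) ≠ 0) :
    Nat.card (L.contractionFullSupportKer e) =
      Nat.card L.fullSupportKer + Nat.card (L.deletionFullSupportKer e) := by
  classical
  rw [← Nat.card_sum, ← Nat.card_congr (Equiv.Set.union
    (L.disjoint_fullSupportKer_deletionFullSupportKer e)), ← kerNonzeroOff_eq_union]
  exact Nat.card_congr ((L.bijOn_update_kerNonzeroOff_contractionFullSupportKer e he).equiv _).symm

end LinearMap

theorem deletion_contraction_full_support_kernel_general {q : ℕ} [Fact (Nat.Prime q)]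
    {m E : Type*} [Fintype m] [Fintype E]
    (A : Matrix m E (ZMod q)) (e : E)
    (h_not_loop : A.transpose e ≠ 0) :
    (Nat.card {y : E → ZMod q // A.mulVec y = 0 ∧ ∀ f, y f ≠ 0} : ℤ) =
      (Nat.card {y : E → ZMod q // y e = 0 ∧
          A.mulVec y ∈ Submodule.span (ZMod q) {A.transpose e} ∧
          ∀ f, f ≠ e → y f ≠ 0} : ℤ) -
      (Nat.card {y : E → ZMod q // y e = 0 ∧ A.mulVec y = 0 ∧
          ∀ f, f ≠ e → y f ≠ 0} : ℤ) := by
  classical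
  have hcol : A.mulVecLin (Pi.single e 1) = A.transpose e := A.mulVec_single_one e
  rw [← hcol] at h_not_loop ⊢
  rw [eq_sub_iff_add_eq]
  exact_mod_cast (A.mulVecLin.card_contractionFullSupportKer e h_not_loop).symm

/-- Deletion–contraction for the count of full-support kernel vectors:
if the column `e` of `M` is neither a loop (zero column) nor a coloop (it lies in the
span of the other columns), then `g_M(q) = g_{M/e}(q) - g_{M-e}(q)`.
Here a full-support kernel vector of the deletion `M - e` is encoded as a vector `y`
with `y e = 0`, all other coordinates nonzero and `M y = 0`; and a full-support kernel
vector of the contraction `M/e` (quotient by the span of column `e`) is encoded as a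
vector `y` with `y e = 0`, all other coordinates nonzero and `M y ∈ span {column e}`. -/
theorem deletion_contraction_full_support_kernel {q : ℕ} [Fact (Nat.Prime q)]
    {m E : Type*} [Fintype m] [Fintype E] [DecidableEq E]
    (A : Matrix m E (ZMod q)) (e : E)
    (h_not_loop : A.transpose e ≠ 0)
    (h_not_coloop : A.transpose e ∈
      Submodule.span (ZMod q) (A.transpose '' {f : E | f ≠ e})) :
    (Nat.card {y : E → ZMod q // A.mulVec y = 0 ∧ ∀ f, y f ≠ 0} : ℤ) =
      (Nat.card {y : E → ZMod q // y e = 0 ∧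
          A.mulVec y ∈ Submodule.span (ZMod q) {A.transpose e} ∧
          ∀ f, f ≠ e → y f ≠ 0} : ℤ) -
      (Nat.card {y : E → ZMod q // y e = 0 ∧ A.mulVec y = 0 ∧
          ∀ f, f ≠ e → y f ≠ 0} : ℤ) :=
  deletion_contraction_full_support_kernel_general A e h_not_loop
end

section
/- Let M be a matrix over F_q with columns indexed by E, and suppose e is a zero column (a loop). Then the number of full-support kernel vectors satisfies g_M(q) = (q-1) \cdot g_{M-e}(q). -/
/-!
Since the loop `e` contributes nothing to `A *ᵥ y`, a full-support kernel vector splits uniquely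
into its nonzero `e`-coordinate and a full-support kernel vector of the deletion, and there are
`q - 1` choices for the former.
-/

namespace Matrix

variable {m E R : Type*} [Fintype E] [DecidableEq E]

theorem mulVec_update_of_transpose_eq_zero [NonUnitalNonAssocSemiring R] {A : Matrix m E R}
    {e : E} (h_loop : Aᵀ e = 0) (y : E → R) (c : R) :
    A *ᵥ Function.update y e c = A *ᵥ y := by
  funext i
  refine Finset.sum_congr rfl fun f _ => ?_
  rcases eq_or_ne f e with rfl | hf
  · simp [show A i f = 0 from congrFun h_loop i]
  · rw [Function.update_of_ne hf]

def loopSplitEquiv [NonUnitalNonAssocSemiring R] (A : Matrix m E R) (e : E) (h_loop : Aᵀ e = 0) :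
    {y : E → R // A *ᵥ y = 0 ∧ ∀ f, y f ≠ 0} ≃
      {r : R // r ≠ 0} × {y : E → R // y e = 0 ∧ A *ᵥ y = 0 ∧ ∀ f, f ≠ e → y f ≠ 0} where
  toFun y :=
    (⟨y.1 e, y.2.2 e⟩,
      ⟨Function.update y.1 e 0, Function.update_self ..,
        (mulVec_update_of_transpose_eq_zero h_loop _ _).trans y.2.1,
        fun f hf => by rw [Function.update_of_ne hf]; exact y.2.2 f⟩)
  invFun p :=
    ⟨Function.update p.2.1 e p.1,
      (mulVec_update_of_transpose_eq_zero h_loop _ _).trans p.2.2.2.1,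
      fun f => by
        rcases eq_or_ne f e with rfl | hf
        · simpa using p.1.2
        · rw [Function.update_of_ne hf]; exact p.2.2.2.2 f hf⟩
  left_inv y := by ext : 1; simp
  right_inv := by
    rintro ⟨r, y, hy, -, -⟩
    ext f
    · simp
    · rcases eq_or_ne f e with rfl | hf <;> simp [*]

theorem card_fullSupport_kernel_of_transpose_eq_zero [NonUnitalNonAssocSemiring R]
    (A : Matrix m E R) (e : E) (h_loop : Aᵀ e = 0) :
    Nat.card {y : E → R // A *ᵥ y = 0 ∧ ∀ f, y f ≠ 0} =
      Nat.card {r : R // r ≠ 0} *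
        Nat.card {y : E → R // y e = 0 ∧ A *ᵥ y = 0 ∧ ∀ f, f ≠ e → y f ≠ 0} := by
  rw [Nat.card_congr (loopSplitEquiv A e h_loop), Nat.card_prod]

end Matrix

/-- `Nat.card` of an infinite type is `0`, so this also holds for `ZMod 0 = ℤ`. -/
theorem ZMod.natCard_subtype_ne_zero (q : ℕ) : Nat.card {r : ZMod q // r ≠ 0} = q - 1 := by
  rcases q with _ | n
  · have : Infinite {r : ℤ // r ≠ 0} :=
      Set.infinite_coe_iff.mpr (Set.finite_singleton 0).infinite_compl
    exact Nat.card_eq_zero_of_infinite (α := {r : ℤ // r ≠ 0})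
  · simp only [ne_eq, Nat.card_eq_fintype_card, Fintype.card_subtype_compl, ZMod.card,
      Fintype.card_unique, add_tsub_cancel_right]

/-- The deletion `M - e` is encoded by the vectors `y` with `y e = 0`. -/
theorem loop_full_support_kernel_general {q : ℕ}
    {m E : Type*} [Fintype E]
    (A : Matrix m E (ZMod q)) (e : E)
    (h_loop : A.transpose e = 0) :
    Nat.card {y : E → ZMod q // A.mulVec y = 0 ∧ ∀ f, y f ≠ 0} =
      (q - 1) *
        Nat.card {y : E → ZMod q // y e = 0 ∧ A.mulVec y = 0 ∧
          ∀ f, f ≠ e → y f ≠ 0} := by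
  classical
  rw [Matrix.card_fullSupport_kernel_of_transpose_eq_zero A e h_loop, ZMod.natCard_subtype_ne_zero]

/-- If `e` is a loop of `M` (a zero column), then the number of full-support kernel
vectors satisfies `g_M(q) = (q-1) * g_{M-e}(q)`, where the deletion `M - e` removes the
column `e` (its full-support kernel vectors being encoded as vectors `y` with `y e = 0`,
all other coordinates nonzero, and `M y = 0`). -/
theorem loop_full_support_kernel {q : ℕ} [Fact (Nat.Prime q)]
    {m E : Type*} [Fintype m] [Fintype E] [DecidableEq E]
    (A : Matrix m E (ZMod q)) (e : E)
    (h_loop : A.transpose e = 0) :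
    Nat.card {y : E → ZMod q // A.mulVec y = 0 ∧ ∀ f, y f ≠ 0} =
      (q - 1) *
        Nat.card {y : E → ZMod q // y e = 0 ∧ A.mulVec y = 0 ∧
          ∀ f, f ≠ e → y f ≠ 0} :=
  loop_full_support_kernel_general A e h_loop
end

section
/- Let \Delta be a triangulation of a closed (compact, without boundary), connected, Z-orientable d-manifold. Then for every integer q \geq 2, the number of nowhere-zero Z_q-flows on \Delta is exactly q - 1. -/
/-! Multiplying a flow `x` pointwise by the fundamental class `ε` gives a function that is
constant along the dual graph: at a ridge lying in exactly the two facets `A` and `B`, both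
`x` and `ε` satisfy a two-term equation `a * x A + b * x B = 0` with `a, b = ±1`, and
multiplying the two equations gives `x A * ε A = x B * ε B`. By connectedness every flow is
therefore `c • ε` with `c = x S * ε S`, and it is nowhere zero exactly when `c ≠ 0`. -/

/-- The entry of the top simplicial boundary matrix in row (ridge) `R` and column
(facet) `S`: if `R ⊆ S` and `S` has exactly one vertex `v` outside `R`, the entry is
`(-1)^j` where `j` is the number of vertices of `S` preceding `v`; otherwise `0`. -/
def bdryEntry {V : Type*} [LinearOrder V] (S R : Finset V) : ℤ :=
  if R ⊆ S ∧ (S \ R).card = 1 then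
    (-1) ^ (S.filter (fun w => ∀ u ∈ S \ R, w < u)).card
  else 0

theorem Finset.eq_or_eq_of_card_filter_eq_two {α : Type*} {s : Finset α} {p : α → Prop}
    [DecidablePred p] (hcard : (s.filter p).card = 2) {a b c : α} (ha : a ∈ s) (hb : b ∈ s)
    (hc : c ∈ s) (hab : a ≠ b) (hpa : p a) (hpb : p b) (hpc : p c) : c = a ∨ c = b := by
  classical
  have hpair : {a, b} = s.filter p :=
    Finset.eq_of_subset_of_card_le (by simp [Finset.insert_subset_iff, ha, hb, hpa, hpb])
      (by rw [hcard, Finset.card_pair hab])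
  simpa [← hpair] using Finset.mem_filter.2 ⟨hc, hpc⟩

open Matrix

section KernelOfTwoTermRows

variable {ρ ι R : Type*} [Fintype ι] [CommRing R]

theorem mul_eq_mul_of_two_term_eq_zero {a b x y e f : R} (ha : a * a = 1) (hb : b * b = 1)
    (hxy : a * x + b * y = 0) (hef : a * e + b * f = 0) : x * e = y * f := by
  linear_combination (-x * e) * ha + (y * f) * hb + (a * e) * hxy - (b * y) * hef

theorem Matrix.two_term_eq_zero_of_mulVec_eq_zero {M : Matrix ρ ι R} {x : ι → R}
    (hx : M *ᵥ x = 0) {r : ρ} {a b : ι} (hab : a ≠ b)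
    (hsupp : ∀ i, i ≠ a → i ≠ b → M r i = 0) : M r a * x a + M r b * x b = 0 := by
  have hr := congrFun hx r
  rwa [Matrix.mulVec, dotProduct, Finset.sum_eq_add_of_mem a b (Finset.mem_univ _)
    (Finset.mem_univ _) hab fun i _ hi => by rw [hsupp i hi.1 hi.2, zero_mul]] at hr

theorem Matrix.mul_eq_mul_of_mulVec_eq_zero {M : Matrix ρ ι R} {x e : ι → R}
    (hx : M *ᵥ x = 0) (he : M *ᵥ e = 0) {r : ρ} {a b : ι} (hab : a ≠ b)
    (hsupp : ∀ i, i ≠ a → i ≠ b → M r i = 0) (ha : M r a * M r a = 1)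
    (hb : M r b * M r b = 1) : x a * e a = x b * e b :=
  mul_eq_mul_of_two_term_eq_zero ha hb (two_term_eq_zero_of_mulVec_eq_zero hx hab hsupp)
    (two_term_eq_zero_of_mulVec_eq_zero he hab hsupp)

def Matrix.nowhereZeroKerEquiv (M : Matrix ρ ι R) {ε : ι → R} (hε : ∀ i, ε i * ε i = 1)
    (hεM : M *ᵥ ε = 0) (hker : ∀ x, M *ᵥ x = 0 → ∀ i j, x i * ε i = x j * ε j) (i₀ : ι) :
    {x : ι → R // M *ᵥ x = 0 ∧ ∀ i, x i ≠ 0} ≃ {c : R // c ≠ 0} where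
  toFun x := ⟨x.1 i₀ * ε i₀, mt (IsUnit.of_mul_eq_one _ (hε i₀)).mul_left_eq_zero.1 (x.2.2 i₀)⟩
  invFun c := ⟨c.1 • ε, by rw [Matrix.mulVec_smul, hεM, smul_zero], fun i =>
    mt (IsUnit.of_mul_eq_one _ (hε i)).mul_left_eq_zero.1 c.2⟩
  left_inv x := by
    ext i
    change x.1 i₀ * ε i₀ * ε i = x.1 i
    rw [hker x.1 x.2.1 i₀ i, mul_assoc, hε, mul_one]
  right_inv c := by
    ext
    change c.1 * ε i₀ * ε i₀ = c.1
    rw [mul_assoc, hε, mul_one]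

end KernelOfTwoTermRows

section Simplicial

variable {V : Type*} [LinearOrder V]

theorem bdryEntry_eq_zero_of_not_subset {S R : Finset V} (h : ¬ R ⊆ S) : bdryEntry S R = 0 :=
  if_neg fun h' => h h'.1

theorem bdryEntry_mul_self {S R : Finset V} (hRS : R ⊆ S) (hcard : (S \ R).card = 1) :
    bdryEntry S R * bdryEntry S R = 1 := by
  rw [bdryEntry, if_pos ⟨hRS, hcard⟩, ← mul_pow]
  norm_num

def boundaryMatrix (facets : Finset (Finset V)) (K : Type*) [Ring K] :
    Matrix (Finset V) {S // S ∈ facets} K :=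
  Matrix.of fun R S => bdryEntry S.1 R

theorem boundaryMatrix_mulVec_eq_zero_iff {facets : Finset (Finset V)} {K : Type*} [Ring K]
    {x : {S // S ∈ facets} → K} :
    boundaryMatrix facets K *ᵥ x = 0 ↔ ∀ R, ∑ S, (bdryEntry S.1 R : K) * x S = 0 :=
  funext_iff

theorem mul_eq_mul_of_adjacent {K : Type*} [CommRing K] {d : ℕ}
    {facets : Finset (Finset V)} (hpure : ∀ S ∈ facets, S.card = d + 1)
    (htwo : ∀ R : Finset V, R.card = d → (∃ S ∈ facets, R ⊆ S) →
      (facets.filter (fun T => R ⊆ T)).card = 2)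
    {x ε : {S // S ∈ facets} → K} (hx : boundaryMatrix facets K *ᵥ x = 0)
    (hε : boundaryMatrix facets K *ᵥ ε = 0)
    {A B : {S // S ∈ facets}} (hAB : A ≠ B) (hd : (A.1 ∩ B.1).card = d) :
    x A * ε A = x B * ε B := by
  have entry_mul_self : ∀ S : {S // S ∈ facets}, A.1 ∩ B.1 ⊆ S.1 →
      (bdryEntry S.1 (A.1 ∩ B.1) : K) * bdryEntry S.1 (A.1 ∩ B.1) = 1 := fun S hS => by
    have hcard : (S.1 \ (A.1 ∩ B.1)).card = 1 := by
      rw [Finset.card_sdiff_of_subset hS, hd, hpure S.1 S.2, Nat.add_sub_cancel_left]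
    rw [← Int.cast_mul, bdryEntry_mul_self hS hcard, Int.cast_one]
  refine Matrix.mul_eq_mul_of_mulVec_eq_zero hx hε (r := A.1 ∩ B.1) hAB (fun S hSA hSB => ?_)
    (entry_mul_self A Finset.inter_subset_left) (entry_mul_self B Finset.inter_subset_right)
  have hnot : ¬ A.1 ∩ B.1 ⊆ S.1 := fun hsub =>
    (Finset.eq_or_eq_of_card_filter_eq_two (htwo _ hd ⟨A.1, A.2, Finset.inter_subset_left⟩)
      A.2 B.2 S.2 (Subtype.coe_ne_coe.2 hAB) Finset.inter_subset_left Finset.inter_subset_right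
      hsub).elim (fun h => hSA (Subtype.ext h)) fun h => hSB (Subtype.ext h)
  simp [boundaryMatrix, bdryEntry_eq_zero_of_not_subset hnot]

end Simplicial

/-- A triangulation of a closed, connected, `ℤ`-orientable `d`-manifold has exactly
`q - 1` nowhere-zero `Z_q`-flows.  The manifold being closed and connected is encoded by
every ridge lying in exactly two facets and the dual graph being connected;
`ℤ`-orientability by the existence of a fundamental class: an integer kernel vector of
the top boundary matrix all of whose coordinates are `±1`. -/
theorem closed_orientable_manifold_flow_count {V : Type*} [LinearOrder V]
    (d q : ℕ) (hq : 2 ≤ q)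
    (facets : Finset (Finset V)) (hpure : ∀ S ∈ facets, S.card = d + 1)
    (hne : facets.Nonempty)
    (htwo : ∀ R : Finset V, R.card = d → (∃ S ∈ facets, R ⊆ S) →
      (facets.filter (fun T => R ⊆ T)).card = 2)
    (hconn : ∀ S T : {S // S ∈ facets},
      Relation.ReflTransGen
        (fun A B : {S // S ∈ facets} => A ≠ B ∧ (A.1 ∩ B.1).card = d) S T)
    (horient : ∃ ε : {S // S ∈ facets} → ℤ, (∀ S, ε S = 1 ∨ ε S = -1) ∧
      ∀ R : Finset V, ∑ S : {S // S ∈ facets}, bdryEntry S.1 R * ε S = 0) :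
    Nat.card {x : {S // S ∈ facets} → ZMod q //
        (∀ R : Finset V,
          ∑ S : {S // S ∈ facets}, (bdryEntry S.1 R : ZMod q) * x S = 0) ∧
        ∀ S, x S ≠ 0} = q - 1 := by
  have : NeZero q := ⟨by omega⟩
  obtain ⟨ε, hε, hεker⟩ := horient
  obtain ⟨S₀, hS₀⟩ := hne
  have hεM : boundaryMatrix facets (ZMod q) *ᵥ (fun S => (ε S : ZMod q)) = 0 :=
    boundaryMatrix_mulVec_eq_zero_iff.2 fun R => by
      exact_mod_cast congrArg (Int.cast : ℤ → ZMod q) (hεker R)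
  have hεsq : ∀ S, (ε S : ZMod q) * ε S = 1 := fun S => by rcases hε S with h | h <;> simp [h]
  have hker : ∀ x, boundaryMatrix facets (ZMod q) *ᵥ x = 0 → ∀ S T, x S * ε S = x T * ε T :=
    fun x hx S T => by
      simpa [Relation.reflTransGen_eq_self] using (hconn S T).lift (fun S => x S * ε S)
        fun A B hAB => mul_eq_mul_of_adjacent hpure htwo hx hεM hAB.1 hAB.2
  calc _ = Nat.card {x // boundaryMatrix facets (ZMod q) *ᵥ x = 0 ∧ ∀ S, x S ≠ 0} := by
        simp only [boundaryMatrix_mulVec_eq_zero_iff]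
    _ = Nat.card {c : ZMod q // c ≠ 0} :=
      Nat.card_congr ((boundaryMatrix facets _).nowhereZeroKerEquiv hεsq hεM hker ⟨S₀, hS₀⟩)
    _ = q - 1 := by simp [Nat.card_eq_fintype_card, Fintype.card_subtype_compl]
end

section
/- Let \Delta be a pure simplicial complex with top boundary matrix \partial\Delta (an integer matrix). Then the function \phi_\Delta(q) counting nowhere-zero Z_q-flows on \Delta is a quasipolynomial in the positive integer q; i.e., there exist a positive integer k and polynomials p_0, ..., p_{k-1} such that \phi_\Delta(q) = p_j(q) whenever q \equiv j mod k. -/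
/-!
Reducing mod `q`, `φ_Δ(q)` counts the nowhere-zero solutions `y ∈ (ℤ/q)^facets` of `∂Δ y = 0`.
Inclusion–exclusion over the set of coordinates forced to vanish turns this into an alternating
sum of numbers of *all* solutions mod `q` of integer linear systems. Such a solution set is
`Hom(C, ℤ/q)` for the finitely generated abelian group `C = ℤⁿ / (rows)`, and `C ≅ ℤ^r ⊕ ⨁ ℤ/nᵢ`
gives `|Hom(C, ℤ/q)| = q^r ∏ gcd(q, nᵢ)`: a polynomial times a function of `q mod ∏ nᵢ`.
Quasipolynomials are closed under sums and products.
-/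

open Finset Polynomial

section Quasipolynomial

variable {R : Type*} [CommSemiring R]

-- `q = 0` is excluded since `ZMod 0 = ℤ`, where the counts below are junk.
def IsQuasipolynomial (f : ℕ → R) : Prop :=
  ∃ k : ℕ, 0 < k ∧ ∃ p : ℕ → R[X], ∀ q : ℕ, 1 ≤ q → f q = (p (q % k)).eval (q : R)

theorem Polynomial.isQuasipolynomial_eval (p : R[X]) :
    IsQuasipolynomial fun q => p.eval (q : R) :=
  ⟨1, one_pos, fun _ => p, fun _ _ => rfl⟩

theorem Function.Periodic.isQuasipolynomial {f : ℕ → R} {k : ℕ} (hf : Function.Periodic f k)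
    (hk : 0 < k) : IsQuasipolynomial f :=
  ⟨k, hk, fun j => C (f j), fun q _ => by rw [eval_C, hf.map_mod_nat]⟩

namespace IsQuasipolynomial

variable {f g : ℕ → R}

theorem exists_common_period (hf : IsQuasipolynomial f) (hg : IsQuasipolynomial g) :
    ∃ k : ℕ, 0 < k ∧ ∃ p p' : ℕ → R[X], ∀ q : ℕ, 1 ≤ q →
      f q = (p (q % k)).eval (q : R) ∧ g q = (p' (q % k)).eval (q : R) := by
  obtain ⟨k, hk, p, hp⟩ := hf
  obtain ⟨k', hk', p', hp'⟩ := hg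
  refine ⟨k * k', Nat.mul_pos hk hk', fun j => p (j % k), fun j => p' (j % k'), fun q hq => ?_⟩
  dsimp only
  rw [Nat.mod_mul_right_mod, Nat.mod_mul_left_mod]
  exact ⟨hp q hq, hp' q hq⟩

theorem congr (hf : IsQuasipolynomial f) (h : ∀ q : ℕ, 1 ≤ q → f q = g q) :
    IsQuasipolynomial g := by
  obtain ⟨k, hk, p, hp⟩ := hf
  exact ⟨k, hk, p, fun q hq => (h q hq).symm.trans (hp q hq)⟩

theorem add (hf : IsQuasipolynomial f) (hg : IsQuasipolynomial g) :
    IsQuasipolynomial (f + g) := by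
  obtain ⟨k, hk, p, p', h⟩ := hf.exists_common_period hg
  refine ⟨k, hk, p + p', fun q hq => ?_⟩
  simp only [Pi.add_apply, eval_add, (h q hq).1, (h q hq).2]

theorem mul (hf : IsQuasipolynomial f) (hg : IsQuasipolynomial g) :
    IsQuasipolynomial (f * g) := by
  obtain ⟨k, hk, p, p', h⟩ := hf.exists_common_period hg
  refine ⟨k, hk, p * p', fun q hq => ?_⟩
  simp only [Pi.mul_apply, eval_mul, (h q hq).1, (h q hq).2]

theorem sum {ι : Type*} (s : Finset ι) {f : ι → ℕ → R} (hf : ∀ i ∈ s, IsQuasipolynomial (f i)) :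
    IsQuasipolynomial fun q => ∑ i ∈ s, f i q := by
  classical
  induction s using Finset.induction_on with
  | empty => simpa using (0 : R[X]).isQuasipolynomial_eval
  | insert i s hi ih =>
    simp only [Finset.sum_insert hi]
    exact (hf i (mem_insert_self i s)).add (ih fun j hj => hf j (mem_insert_of_mem hj))

theorem prod {ι : Type*} (s : Finset ι) {f : ι → ℕ → R} (hf : ∀ i ∈ s, IsQuasipolynomial (f i)) :
    IsQuasipolynomial fun q => ∏ i ∈ s, f i q := by
  classical
  induction s using Finset.induction_on with
  | empty => simpa using (1 : R[X]).isQuasipolynomial_eval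
  | insert i s hi ih =>
    simp only [Finset.prod_insert hi]
    exact (hf i (mem_insert_self i s)).mul (ih fun j hj => hf j (mem_insert_of_mem hj))

theorem const_mul (c : R) (hf : IsQuasipolynomial f) : IsQuasipolynomial fun q => c * f q := by
  simpa only [Pi.mul_def, eval_C] using (C c).isQuasipolynomial_eval.mul hf

end IsQuasipolynomial

end Quasipolynomial

theorem ZMod.card_natCast_mul_eq_zero (n q : ℕ) [NeZero q] :
    Nat.card {x : ZMod q // (n : ZMod q) * x = 0} = q.gcd n := by
  let φ := AddMonoidHom.mulLeft (n : ZMod q)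
  have hrange : φ.range = AddSubgroup.zmultiples (n : ZMod q) := by
    ext x
    simp only [AddMonoidHom.mem_range, AddSubgroup.mem_zmultiples_iff, φ,
      AddMonoidHom.coe_mulLeft, zsmul_eq_mul]
    constructor
    · rintro ⟨y, rfl⟩
      obtain ⟨k, rfl⟩ := ZMod.intCast_surjective y
      exact ⟨k, mul_comm _ _⟩
    · rintro ⟨k, rfl⟩
      exact ⟨k, mul_comm _ _⟩
  have hcard : Nat.card φ.ker * (q / q.gcd n) = q := by
    rw [← ZMod.addOrderOf_coe _ (NeZero.ne q), ← Nat.card_zmultiples, ← hrange,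
      ← AddSubgroup.index_ker, AddSubgroup.card_mul_index, Nat.card_zmod]
  have hdiv : 0 < q / q.gcd n :=
    Nat.div_pos (Nat.gcd_le_left n (NeZero.pos q)) (Nat.gcd_pos_of_pos_left n (NeZero.pos q))
  change Nat.card φ.ker = _
  rw [Nat.eq_div_of_mul_eq_left hdiv.ne' hcard,
    Nat.div_div_self (Nat.gcd_dvd_left q n) (NeZero.ne q)]

theorem ZMod.card_linearMap_zmod (n q : ℕ) [NeZero q] :
    Nat.card (ZMod n →ₗ[ℤ] ZMod q) = q.gcd n := by
  rw [← ZMod.card_natCast_mul_eq_zero]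
  symm
  refine Nat.card_congr ((Equiv.subtypeEquiv (zmultiplesHom (ZMod q)) fun x => ?_).trans
    ((ZMod.lift n).trans (addMonoidHomLequivInt ℤ).toEquiv))
  simp [zmultiplesHom_apply]

theorem Nat.card_linearMap_prod {R M N P : Type*} [Semiring R] [AddCommMonoid M] [AddCommMonoid N]
    [AddCommMonoid P] [Module R M] [Module R N] [Module R P] :
    Nat.card (M × N →ₗ[R] P) = Nat.card (M →ₗ[R] P) * Nat.card (N →ₗ[R] P) := by
  rw [← Nat.card_prod, Nat.card_congr (LinearMap.coprodEquiv ℕ).toEquiv]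

theorem Nat.card_linearMap_pi {R M ι : Type*} {φ : ι → Type*} [Semiring R] [Fintype ι]
    [DecidableEq ι] [∀ i, AddCommMonoid (φ i)] [∀ i, Module R (φ i)] [AddCommMonoid M] [Module R M] :
    Nat.card ((Π i, φ i) →ₗ[R] M) = ∏ i, Nat.card (φ i →ₗ[R] M) := by
  rw [← Nat.card_pi, Nat.card_congr (LinearMap.lsum R φ ℕ).toEquiv]

theorem isQuasipolynomial_gcd {R : Type*} [CommSemiring R] (n : ℕ) :
    IsQuasipolynomial fun q => (q.gcd n : R) := by
  rcases Nat.eq_zero_or_pos n with rfl | hn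
  · simpa using (X : R[X]).isQuasipolynomial_eval
  · exact Function.Periodic.isQuasipolynomial (fun q => by simp [Nat.gcd_add_self_left]) hn

theorem isQuasipolynomial_card_linearMap_zmod {R : Type*} [CommSemiring R] (M : Type*)
    [AddCommGroup M] [Module.Finite ℤ M] :
    IsQuasipolynomial fun q => (Nat.card (M →ₗ[ℤ] ZMod q) : R) := by
  have : AddGroup.FG M := Module.Finite.iff_addGroup_fg.mp inferInstance
  obtain ⟨r, ι, _, p, -, e, ⟨φ⟩⟩ := AddCommGroup.equiv_free_prod_directSum_zmod M
  classical
  let ψ : M ≃ₗ[ℤ] (Fin r → ℤ) × Π i, ZMod (p i ^ e i) :=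
    φ.toIntLinearEquiv.trans ((Finsupp.linearEquivFunOnFinite ℤ ℤ (Fin r)).prodCongr
      (DirectSum.linearEquivFunOnFintype ℤ ι _))
  have hcard : ∀ q, q ≠ 0 → Nat.card (M →ₗ[ℤ] ZMod q) =
      (∏ _ : Fin r, q) * ∏ i, q.gcd (p i ^ e i) := by
    intro q hq
    have : NeZero q := ⟨hq⟩
    rw [Nat.card_congr (ψ.arrowCongr (LinearEquiv.refl ℤ (ZMod q))).toEquiv,
      Nat.card_linearMap_prod, Nat.card_linearMap_pi, Nat.card_linearMap_pi]
    simp [Nat.card_congr (LinearMap.ringLmapEquivSelf ℤ ℤ (ZMod q)).toEquiv, ZMod.card_linearMap_zmod]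
  have hX : IsQuasipolynomial fun q => (q : R) := by simpa using (X : R[X]).isQuasipolynomial_eval
  refine ((IsQuasipolynomial.prod (univ : Finset (Fin r)) fun _ _ => hX).mul
    (IsQuasipolynomial.prod univ fun i _ => isQuasipolynomial_gcd (p i ^ e i))).congr fun q hq => ?_
  rw [hcard q (by omega)]
  push_cast
  rfl

def Submodule.liftQEquiv {R M P : Type*} [Ring R] [AddCommGroup M] [Module R M] [AddCommGroup P]
    [Module R P] (p : Submodule R M) :
    {f : M →ₗ[R] P // p ≤ LinearMap.ker f} ≃ (M ⧸ p →ₗ[R] P) where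
  toFun f := p.liftQ f.1 f.2
  invFun g := ⟨g.comp p.mkQ, fun x hx => by simp [(Submodule.Quotient.mk_eq_zero p).2 hx]⟩
  left_inv f := by ext; simp
  right_inv g := p.linearMap_qext (p.liftQ_mkQ _ _)

theorem Nat.card_solutions_eq_card_linearMap {ι A : Type*} [Fintype ι] [AddCommGroup A]
    (G : Set (ι → ℤ)) :
    Nat.card {y : ι → A // ∀ v ∈ G, ∑ i, v i • y i = 0} =
      Nat.card ((ι → ℤ) ⧸ Submodule.span ℤ G →ₗ[ℤ] A) := by
  refine Nat.card_congr ((Equiv.subtypeEquiv (Module.piEquiv ι ℤ A).toEquiv fun y => ?_).trans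
    (Submodule.span ℤ G).liftQEquiv)
  simp [Submodule.span_le, Set.subset_def, Module.piEquiv_apply_apply]

theorem isQuasipolynomial_card_solutions {R ι : Type*} [CommSemiring R] [Fintype ι]
    (G : Set (ι → ℤ)) :
    IsQuasipolynomial fun q => (Nat.card {y : ι → ZMod q // ∀ v ∈ G, ∑ i, v i • y i = 0} : R) := by
  simpa only [Nat.card_solutions_eq_card_linearMap] using
    isQuasipolynomial_card_linearMap_zmod (R := R) ((ι → ℤ) ⧸ Submodule.span ℤ G)

theorem Nat.card_forall_not_and_eq_sum_powerset {α ι : Type*} [Finite α] [Fintype ι]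
    (Z : ι → α → Prop) (P : α → Prop) :
    (Nat.card {a // (∀ i, ¬ Z i a) ∧ P a} : ℤ) =
      ∑ t ∈ univ.powerset, (-1) ^ #t * (Nat.card {a // (∀ i ∈ t, Z i a) ∧ P a} : ℤ) := by
  classical
  have := Fintype.ofFinite α
  have hinf (t : Finset ι) (Q : ι → α → Prop) [∀ i, DecidablePred (Q i)] :
      t.inf (fun i => univ.filter (Q i)) = univ.filter fun a => ∀ i ∈ t, Q i a := by
    induction t using Finset.induction_on with
    | empty => simp
    | insert i t hi ih => ext; simp [ih]
  have hcard (p : α → Prop) [DecidablePred p] : Nat.card {a // p a} = #(univ.filter p) := by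
    rw [Nat.card_eq_fintype_card, Fintype.card_subtype]
  simp only [hcard]
  simpa [hinf, compl_filter, Finset.sum_boole, Finset.filter_filter] using
    inclusion_exclusion_sum_inf_compl (G := ℤ) univ (fun i => univ.filter (Z i))
      fun a => if P a then 1 else 0

theorem isQuasipolynomial_card_nowhereZero_solutions {R ι : Type*} [CommRing R] [Fintype ι]
    (G : Set (ι → ℤ)) :
    IsQuasipolynomial fun q =>
      (Nat.card {y : ι → ZMod q // (∀ i, y i ≠ 0) ∧ ∀ v ∈ G, ∑ i, v i • y i = 0} : R) := by
  classical
  have hsingle (t : Finset ι) (q : ℕ) (y : ι → ZMod q) :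
      ((∀ i ∈ t, y i = 0) ∧ ∀ v ∈ G, ∑ i, v i • y i = 0) ↔
        ∀ v ∈ (fun i => Pi.single i 1) '' t ∪ G, ∑ i, v i • y i = 0 := by
    simp [or_imp, forall_and, Pi.single_apply]
  have hIE (q : ℕ) (hq : q ≠ 0) :
      (Nat.card {y : ι → ZMod q // (∀ i, y i ≠ 0) ∧ ∀ v ∈ G, ∑ i, v i • y i = 0} : R) =
        ∑ t ∈ (univ : Finset ι).powerset, (-1) ^ #t * (Nat.card {y : ι → ZMod q //
          ∀ v ∈ (fun i => Pi.single i 1) '' t ∪ G, ∑ i, v i • y i = 0} : R) := by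
    have : NeZero q := ⟨hq⟩
    have h := Nat.card_forall_not_and_eq_sum_powerset (fun i (y : ι → ZMod q) => y i = 0)
      fun y => ∀ v ∈ G, ∑ i, v i • y i = 0
    simp only [Nat.card_congr (Equiv.subtypeEquivRight (hsingle _ q))] at h
    simpa using congrArg (Int.cast : ℤ → R) h
  exact (IsQuasipolynomial.sum _ fun t _ => (isQuasipolynomial_card_solutions _).const_mul _).congr
    fun q hq => (hIE q (by omega)).symm

def Int.equivZModNeZero (q : ℕ) [NeZero q] : {n : ℤ // 0 < n ∧ n < q} ≃ {a : ZMod q // a ≠ 0} where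
  toFun n := ⟨n, by
    rw [Ne, ZMod.intCast_zmod_eq_zero_iff_dvd]
    intro h
    have := Int.le_of_dvd n.2.1 h
    omega⟩
  invFun a := ⟨((a.1.val : ℕ) : ℤ), by
    have := ZMod.val_lt a.1
    have := (ZMod.val_ne_zero a.1).2 a.2
    omega⟩
  left_inv n := Subtype.ext <| (ZMod.val_intCast _).trans (Int.emod_eq_of_lt n.2.1.le n.2.2)
  right_inv a := Subtype.ext (by simp)

theorem Nat.card_flows_eq_card_nowhereZero_solutions {ι ρ : Type*} [Fintype ι] (A : ρ → ι → ℤ)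
    (q : ℕ) [NeZero q] :
    Nat.card {x : ι → ℤ // (∀ i, 0 < x i ∧ x i < q) ∧ ∀ r, (q : ℤ) ∣ ∑ i, A r i * x i} =
      Nat.card {y : ι → ZMod q // (∀ i, y i ≠ 0) ∧ ∀ v ∈ Set.range A, ∑ i, v i • y i = 0} := by
  let e : {x : ι → ℤ // ∀ i, 0 < x i ∧ x i < q} ≃ {y : ι → ZMod q // ∀ i, y i ≠ 0} :=
    Equiv.subtypePiEquivPi.trans
      ((Equiv.piCongrRight fun _ => Int.equivZModNeZero q).trans Equiv.subtypePiEquivPi.symm)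
  refine Nat.card_congr <| (Equiv.subtypeSubtypeEquivSubtypeInter _ _).symm.trans <|
    (Equiv.subtypeEquiv e fun x => ?_).trans <|
    Equiv.subtypeSubtypeEquivSubtypeInter _ _
  have he (i : ι) : (e x).1 i = x.1 i := rfl
  simp [he, ← ZMod.intCast_zmod_eq_zero_iff_dvd, zsmul_eq_mul]

theorem isQuasipolynomial_card_flows {R ι ρ : Type*} [CommRing R] [Fintype ι] (A : ρ → ι → ℤ) :
    IsQuasipolynomial fun q => (Nat.card {x : ι → ℤ //
      (∀ i, 0 < x i ∧ x i < q) ∧ ∀ r, (q : ℤ) ∣ ∑ i, A r i * x i} : R) :=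
  (isQuasipolynomial_card_nowhereZero_solutions (Set.range A)).congr fun q hq => by
    have : NeZero q := ⟨by omega⟩
    rw [Nat.card_flows_eq_card_nowhereZero_solutions]

theorem flow_counting_function_is_quasipolynomial_general {V : Type*} [LinearOrder V]
    (facets : Finset (Finset V)) :
    ∃ k : ℕ, 0 < k ∧ ∃ p : ℕ → Polynomial ℚ, ∀ q : ℕ, 1 ≤ q →
      (Nat.card {x : {S // S ∈ facets} → ℤ //
          (∀ S, 0 < x S ∧ x S < q) ∧
          ∀ R : Finset V, (q : ℤ) ∣
            ∑ S : {S // S ∈ facets}, bdryEntry S.1 R * x S} : ℚ) =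
        (p (q % k)).eval (q : ℚ) :=
  isQuasipolynomial_card_flows fun R (S : {S // S ∈ facets}) => bdryEntry S.1 R

/-- The function `φ_Δ(q)` counting nowhere-zero `Z_q`-flows on a pure simplicial
complex `Δ` (i.e. integer vectors `x` with `0 < x_S < q` on every facet whose boundary
vanishes mod `q`) is a quasipolynomial in `q`: there are a period `k > 0` and
constituent polynomials `p_0, …, p_{k-1}` with `φ_Δ(q) = p_{q mod k}(q)`. -/
theorem flow_counting_function_is_quasipolynomial {V : Type*} [LinearOrder V]
    (d : ℕ) (facets : Finset (Finset V)) (hpure : ∀ S ∈ facets, S.card = d + 1) :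
    ∃ k : ℕ, 0 < k ∧ ∃ p : ℕ → Polynomial ℚ, ∀ q : ℕ, 1 ≤ q →
      (Nat.card {x : {S // S ∈ facets} → ℤ //
          (∀ S, 0 < x S ∧ x S < q) ∧
          ∀ R : Finset V, (q : ℤ) ∣
            ∑ S : {S // S ∈ facets}, bdryEntry S.1 R * x S} : ℚ) =
        (p (q % k)).eval (q : ℚ) :=
  flow_counting_function_is_quasipolynomial_general facets
end

section
/- Let \Delta be a simplicial triangulation of the Klein bottle. Then the number of nowhere-zero Z_q-flows on \Delta is 0 if q is odd and 1 if q is even; in particular \phi_\Delta(q) is a quasipolynomial of period exactly 2 and is not a polynomial in q. -/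
open Relation

section Flows

variable {ι F G : Type*}

lemma eq_or_eq_neg_of_zsmul_add_zsmul_eq_zero [AddCommGroup G] {u w : ℤ} (hu : IsUnit u)
    (hw : IsUnit w) {a b : G} (h : u • a + w • b = 0) : b = a ∨ b = -a := by
  rcases Int.isUnit_iff.mp hu with rfl | rfl <;> rcases Int.isUnit_iff.mp hw with rfl | rfl <;>
    grind

def IsSignedPair (v : F → ℤ) : Prop :=
  ∃ A B, A ≠ B ∧ IsUnit (v A) ∧ IsUnit (v B) ∧ ∀ C, C ≠ A → C ≠ B → v C = 0

namespace IsSignedPair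

variable {v : F → ℤ}

lemma exists_eq_or_eq_of_ne_zero (hv : IsSignedPair v) :
    ∃ A B, ∀ C, v C ≠ 0 → C = A ∨ C = B := by
  obtain ⟨A, B, -, -, -, hzero⟩ := hv
  exact ⟨A, B, fun C hC => by by_contra! h; exact hC (hzero C h.1 h.2)⟩

lemma isUnit_of_ne_zero (hv : IsSignedPair v) {A : F} (hA : v A ≠ 0) : IsUnit (v A) := by
  obtain ⟨A', B', -, hA', hB', hzero⟩ := hv
  by_contra hAu
  exact hA (hzero A (by rintro rfl; exact hAu hA') (by rintro rfl; exact hAu hB'))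

lemma eq_zero_of_ne (hv : IsSignedPair v) {A B C : F} (hAB : A ≠ B) (hA : v A ≠ 0)
    (hB : v B ≠ 0) (hCA : C ≠ A) (hCB : C ≠ B) : v C = 0 := by
  obtain ⟨A', B', hpair⟩ := hv.exists_eq_or_eq_of_ne_zero
  by_contra hC
  rcases hpair A hA with rfl | rfl <;> rcases hpair B hB with rfl | rfl <;>
    rcases hpair C hC with rfl | rfl <;> simp_all

variable [Fintype F]

lemma sum_smul_eq [AddCommGroup G] (hv : IsSignedPair v) {A B : F} (hAB : A ≠ B)
    (hA : v A ≠ 0) (hB : v B ≠ 0) (x : F → G) : ∑ j, v j • x j = v A • x A + v B • x B :=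
  Fintype.sum_eq_add A B hAB fun C hC => by rw [hv.eq_zero_of_ne hAB hA hB hC.1 hC.2, zero_smul]

lemma sum_mul_sign (hv : IsSignedPair v) {ε : F → ℤ} (hε : ∀ j, IsUnit (ε j)) :
    ∑ j, v j * ε j = 0 ∨ ∑ j, v j * ε j = 2 ∨ ∑ j, v j * ε j = -2 := by
  obtain ⟨A, B, hAB, hA, hB, hzero⟩ := hv
  rw [Fintype.sum_eq_add A B hAB fun C hC => by rw [hzero C hC.1 hC.2, zero_mul]]
  rcases Int.isUnit_iff.mp (hA.mul (hε A)) with h₁ | h₁ <;>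
    rcases Int.isUnit_iff.mp (hB.mul (hε B)) with h₂ | h₂ <;> omega

end IsSignedPair

/-- Every ridge lies in no facet or in exactly two, with incidence numbers `±1`. -/
def IsPseudomanifoldBoundary (M : ι → F → ℤ) : Prop :=
  ∀ i, M i = 0 ∨ IsSignedPair (M i)

def DualAdj (M : ι → F → ℤ) (A B : F) : Prop :=
  ∃ i, M i A ≠ 0 ∧ M i B ≠ 0

variable [Fintype F] [AddCommGroup G] {M : ι → F → ℤ}

def IsFlow (M : ι → F → ℤ) (x : F → G) : Prop :=
  ∀ i, ∑ j, M i j • x j = 0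

lemma IsPseudomanifoldBoundary.sum_mul_sign (hM : IsPseudomanifoldBoundary M) (i : ι)
    {ε : F → ℤ} (hε : ∀ j, IsUnit (ε j)) :
    ∑ j, M i j * ε j = 0 ∨ ∑ j, M i j * ε j = 2 ∨ ∑ j, M i j * ε j = -2 := by
  rcases hM i with h | h
  · simp [h]
  · exact h.sum_mul_sign hε

lemma IsPseudomanifoldBoundary.isFlow_const (hM : IsPseudomanifoldBoundary M) {a : G}
    (ha : 2 • a = 0) : IsFlow M fun _ => a := by
  intro i
  rw [← Finset.sum_smul]
  have hsum := hM.sum_mul_sign i (ε := 1) fun _ => isUnit_one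
  simp only [Pi.one_apply, mul_one] at hsum
  rcases hsum with h | h | h <;> simp [h, ofNat_zsmul, ha]

namespace IsFlow

variable {x : F → G}

lemma eq_or_eq_neg_of_dualAdj (hM : IsPseudomanifoldBoundary M) (hx : IsFlow M x)
    {A B : F} (hAB : DualAdj M A B) : x B = x A ∨ x B = -x A := by
  obtain ⟨i, hA, hB⟩ := hAB
  by_cases hne : A = B
  · exact .inl (congrArg x hne.symm)
  have hv : IsSignedPair (M i) := (hM i).resolve_left fun h => hA (by simp [h])
  have hsum := hx i
  rw [hv.sum_smul_eq hne hA hB] at hsum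
  exact eq_or_eq_neg_of_zsmul_add_zsmul_eq_zero (hv.isUnit_of_ne_zero hA)
    (hv.isUnit_of_ne_zero hB) hsum

lemma eq_or_eq_neg_of_reflTransGen (hM : IsPseudomanifoldBoundary M) (hx : IsFlow M x)
    {A B : F} (hAB : ReflTransGen (DualAdj M) A B) : x B = x A ∨ x B = -x A := by
  induction hAB with
  | refl => exact .inl rfl
  | tail _ hBC ih =>
    rcases hx.eq_or_eq_neg_of_dualAdj hM hBC with h | h <;> rcases ih with h' | h' <;>
      simp [h, h']

lemma two_nsmul_eq_zero (hM : IsPseudomanifoldBoundary M)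
    (hconn : ∀ A B, ReflTransGen (DualAdj M) A B) (hrigid : ∀ ε : F → ℤ, IsFlow M ε → ε = 0)
    (hx : IsFlow M x) (A : F) : 2 • x A = 0 := by
  classical
  by_contra h2
  -- Otherwise the signs of `x` relative to `x A` form a nonzero integer flow.
  set ε : F → ℤ := fun j => if x j = x A then 1 else -1
  have hε : ∀ j, IsUnit (ε j) := fun j => by by_cases h : x j = x A <;> simp [ε, h]
  have hxε : ∀ j, x j = ε j • x A := fun j => by
    by_cases h : x j = x A
    · simp [ε, h]
    · simpa [ε, h] using (hx.eq_or_eq_neg_of_reflTransGen hM (hconn A j)).resolve_left h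
  have hεflow : IsFlow M ε := fun i => by
    have hsum := hx i
    rw [show ∑ j, M i j • x j = (∑ j, M i j * ε j) • x A by
      rw [Finset.sum_smul]
      exact Finset.sum_congr rfl fun j _ => by rw [mul_smul, ← hxε j]] at hsum
    rcases hM.sum_mul_sign i hε with h | h | h
    · simpa using h
    · rw [h, ofNat_zsmul] at hsum; exact absurd hsum h2
    · rw [h, neg_smul, ofNat_zsmul, neg_eq_zero] at hsum; exact absurd hsum h2
  simpa [ε] using congrFun (hrigid ε hεflow) A

lemma eq_of_connected (hM : IsPseudomanifoldBoundary M)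
    (hconn : ∀ A B, ReflTransGen (DualAdj M) A B) (hrigid : ∀ ε : F → ℤ, IsFlow M ε → ε = 0)
    (hx : IsFlow M x) (A B : F) : x B = x A := by
  rcases hx.eq_or_eq_neg_of_reflTransGen hM (hconn A B) with h | h
  · exact h
  · rw [h, neg_eq_iff_add_eq_zero, ← two_nsmul, hx.two_nsmul_eq_zero hM hconn hrigid A]

end IsFlow

def nowhereZeroFlowEquiv (hM : IsPseudomanifoldBoundary M)
    (hconn : ∀ A B, ReflTransGen (DualAdj M) A B) (hrigid : ∀ ε : F → ℤ, IsFlow M ε → ε = 0)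
    (A : F) : {x : F → G // IsFlow M x ∧ ∀ j, x j ≠ 0} ≃ {a : G // addOrderOf a = 2} where
  toFun x := ⟨x.1 A, addOrderOf_eq_prime_iff.mpr
    ⟨x.2.1.two_nsmul_eq_zero hM hconn hrigid A, x.2.2 A⟩⟩
  invFun a := ⟨fun _ => a, hM.isFlow_const (addOrderOf_eq_prime_iff.mp a.2).1,
    fun _ => (addOrderOf_eq_prime_iff.mp a.2).2⟩
  left_inv x := Subtype.ext <| funext fun B => (x.2.1.eq_of_connected hM hconn hrigid A B).symm
  right_inv _ := rfl

end Flows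

lemma ZMod.card_addOrderOf_eq_two (q : ℕ) [NeZero q] :
    Nat.card {a : ZMod q // addOrderOf a = 2} = if q % 2 = 1 then 0 else 1 := by
  rw [Nat.card_eq_fintype_card, Fintype.card_subtype]
  split_ifs with hq
  · refine Finset.card_eq_zero.mpr (Finset.filter_eq_empty_iff.mpr fun a _ ha => ?_)
    have := ha ▸ ZMod.card q ▸ addOrderOf_dvd_card (x := a)
    omega
  · rw [IsAddCyclic.card_addOrderOf_eq_totient (by rw [ZMod.card]; omega), Nat.totient_two]

lemma card_nowhereZeroFlow_zmod {ι F : Type*} [Fintype F] [Nonempty F] {M : ι → F → ℤ}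
    (hM : IsPseudomanifoldBoundary M) (hconn : ∀ A B, ReflTransGen (DualAdj M) A B)
    (hrigid : ∀ ε : F → ℤ, IsFlow M ε → ε = 0) (q : ℕ) [NeZero q] :
    Nat.card {x : F → ZMod q // IsFlow M x ∧ ∀ j, x j ≠ 0} = if q % 2 = 1 then 0 else 1 := by
  rw [Nat.card_congr (nowhereZeroFlowEquiv hM hconn hrigid (Classical.arbitrary F)),
    ZMod.card_addOrderOf_eq_two]

lemma not_exists_polynomial_eval_eq_parity {R : Type*} [CommRing R] [IsDomain R] [CharZero R]
    {f : ℕ → ℕ} (hf : ∀ q, 1 ≤ q → f q = if q % 2 = 1 then 0 else 1) :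
    ¬ ∃ P : Polynomial R, ∀ q : ℕ, 1 ≤ q → (f q : R) = P.eval (q : R) := by
  rintro ⟨P, hP⟩
  have hP0 : P = 0 := by
    refine P.eq_zero_of_infinite_isRoot (Set.infinite_of_injective_forall_mem
      (f := fun k : ℕ => ((2 * k + 1 : ℕ) : R)) ?_ fun k => ?_)
    · exact Nat.cast_injective.comp fun a b h => by simpa using h
    · simpa [hf (2 * k + 1) (by omega)] using (hP (2 * k + 1) (by omega)).symm
  simpa [hP0, hf 2 one_le_two] using hP 2 one_le_two

section Boundary

variable {V : Type*} [LinearOrder V]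

lemma bdryEntry_eq_zero_or_isUnit (S R : Finset V) :
    bdryEntry S R = 0 ∨ IsUnit (bdryEntry S R) := by
  unfold bdryEntry
  split_ifs
  · exact .inr (isUnit_neg_one.pow _)
  · exact .inl rfl

lemma bdryEntry_ne_zero_iff {S R : Finset V} (hS : S.card = 3) :
    bdryEntry S R ≠ 0 ↔ R ⊆ S ∧ R.card = 2 := by
  unfold bdryEntry
  split_ifs with h
  · refine iff_of_true (pow_ne_zero _ (by norm_num)) ⟨h.1, ?_⟩
    have := Finset.card_sdiff_of_subset h.1
    omega
  · refine iff_of_false (not_not.mpr rfl) fun hR => h ⟨hR.1, ?_⟩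
    rw [Finset.card_sdiff_of_subset hR.1]
    omega

def topBoundary (facets : Finset (Finset V)) (R : Finset V) (S : {S // S ∈ facets}) : ℤ :=
  bdryEntry S.1 R

variable {facets : Finset (Finset V)}

lemma isFlow_topBoundary_iff {A : Type*} [CommRing A] {x : {S // S ∈ facets} → A} :
    IsFlow (topBoundary facets) x ↔
      ∀ R : Finset V, ∑ S : {S // S ∈ facets}, (bdryEntry S.1 R : A) * x S = 0 := by
  simp [IsFlow, topBoundary, zsmul_eq_mul]

lemma isPseudomanifoldBoundary_topBoundary (hpure : ∀ S ∈ facets, S.card = 3)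
    (htwo : ∀ R : Finset V, R.card = 2 → (∃ S ∈ facets, R ⊆ S) →
      (facets.filter (fun T => R ⊆ T)).card = 2) :
    IsPseudomanifoldBoundary (topBoundary facets) := by
  intro R
  by_cases hzero : ∀ S, topBoundary facets R S = 0
  · exact .inl (funext hzero)
  obtain ⟨S, hS⟩ := not_forall.mp hzero
  obtain ⟨hRS, hR⟩ := (bdryEntry_ne_zero_iff (hpure S.1 S.2)).mp hS
  obtain ⟨a, b, hab, hfilter⟩ := Finset.card_eq_two.mp (htwo R hR ⟨S.1, S.2, hRS⟩)
  have mem_filter : ∀ T, T ∈ facets ∧ R ⊆ T ↔ T = a ∨ T = b := fun T => by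
    rw [← Finset.mem_filter, hfilter, Finset.mem_insert, Finset.mem_singleton]
  have ha := (mem_filter a).mpr (.inl rfl)
  have hb := (mem_filter b).mpr (.inr rfl)
  have isUnit_of_subset : ∀ T : {S // S ∈ facets}, R ⊆ T.1 → IsUnit (topBoundary facets R T) :=
    fun T hT => (bdryEntry_eq_zero_or_isUnit T.1 R).resolve_left
      ((bdryEntry_ne_zero_iff (hpure T.1 T.2)).mpr ⟨hT, hR⟩)
  refine .inr ⟨⟨a, ha.1⟩, ⟨b, hb.1⟩, fun h => hab (congrArg Subtype.val h),
    isUnit_of_subset _ ha.2, isUnit_of_subset _ hb.2, fun C hCa hCb => ?_⟩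
  by_contra hC
  rcases (mem_filter C.1).mp ⟨C.2, ((bdryEntry_ne_zero_iff (hpure C.1 C.2)).mp hC).1⟩ with h | h
  · exact hCa (Subtype.ext h)
  · exact hCb (Subtype.ext h)

lemma dualAdj_topBoundary (hpure : ∀ S ∈ facets, S.card = 3) {A B : {S // S ∈ facets}}
    (hAB : (A.1 ∩ B.1).card = 2) : DualAdj (topBoundary facets) A B :=
  ⟨A.1 ∩ B.1, (bdryEntry_ne_zero_iff (hpure A.1 A.2)).mpr ⟨Finset.inter_subset_left, hAB⟩,
    (bdryEntry_ne_zero_iff (hpure B.1 B.2)).mpr ⟨Finset.inter_subset_right, hAB⟩⟩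

end Boundary

/-- For a simplicial triangulation `Δ` of the Klein bottle, the number of nowhere-zero
`Z_q`-flows is `0` for odd `q` and `1` for even `q`; in particular `φ_Δ` is a
quasipolynomial of period `2` and is not a polynomial in `q`.  Being a triangulation of
the Klein bottle is encoded combinatorially: `Δ` is a nonempty pure `2`-dimensional
complex, every ridge (edge) lies in exactly two facets, the dual graph is connected
(closed connected surface), and the top integral homology vanishes (non-orientability:
the integer kernel of the top boundary matrix is trivial). -/
theorem klein_bottle_flow_count {V : Type*} [LinearOrder V]
    (facets : Finset (Finset V)) (hpure : ∀ S ∈ facets, S.card = 3)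
    (hne : facets.Nonempty)
    (htwo : ∀ R : Finset V, R.card = 2 → (∃ S ∈ facets, R ⊆ S) →
      (facets.filter (fun T => R ⊆ T)).card = 2)
    (hconn : ∀ S T : {S // S ∈ facets},
      Relation.ReflTransGen
        (fun A B : {S // S ∈ facets} => A ≠ B ∧ (A.1 ∩ B.1).card = 2) S T)
    (hnonorient : ∀ ε : {S // S ∈ facets} → ℤ,
      (∀ R : Finset V, ∑ S : {S // S ∈ facets}, bdryEntry S.1 R * ε S = 0) → ε = 0) :
    (∀ q : ℕ, 1 ≤ q →
      Nat.card {x : {S // S ∈ facets} → ZMod q //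
          (∀ R : Finset V,
            ∑ S : {S // S ∈ facets}, (bdryEntry S.1 R : ZMod q) * x S = 0) ∧
          ∀ S, x S ≠ 0} = if q % 2 = 1 then 0 else 1) ∧
    ¬ ∃ P : Polynomial ℚ, ∀ q : ℕ, 1 ≤ q →
      (Nat.card {x : {S // S ∈ facets} → ZMod q //
          (∀ R : Finset V,
            ∑ S : {S // S ∈ facets}, (bdryEntry S.1 R : ZMod q) * x S = 0) ∧
          ∀ S, x S ≠ 0} : ℚ) = P.eval (q : ℚ) := by
  have hM := isPseudomanifoldBoundary_topBoundary hpure htwo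
  have hdual : ∀ A B, ReflTransGen (DualAdj (topBoundary facets)) A B := fun A B =>
    ReflTransGen.mono (fun _ _ h => dualAdj_topBoundary hpure h.2) _ _ (hconn A B)
  have hrigid : ∀ ε, IsFlow (topBoundary facets) ε → ε = 0 := fun ε hε =>
    hnonorient ε (by simpa using isFlow_topBoundary_iff.mp hε)
  have := hne.coe_sort
  have hcount := fun q (hq : 1 ≤ q) =>
    have : NeZero q := NeZero.of_pos hq
    card_nowhereZeroFlow_zmod hM hdual hrigid q
  simp only [isFlow_topBoundary_iff] at hcount
  exact ⟨hcount, not_exists_polynomial_eval_eq_parity hcount⟩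
end

section
/- Let M be an integer matrix with column set E such that every square submatrix has determinant of absolute value at most B, and let q > B be prime. Then a subset of columns of M is linearly independent over Q if and only if its reduction mod q is linearly independent over F_q; consequently the column matroid of M over Q equals that of its reduction mod q. -/
/-! Independence of a set of columns is witnessed by a nonzero maximal minor, over any field.
The minors of `A` are integers of absolute value at most `B < q`, so each one vanishes in
`ZMod q` exactly when it vanishes in `ℚ`. -/

open Matrix

namespace Matrix

variable {K R m n : Type*} [Field K] [Fintype m] [Fintype n] [DecidableEq n]

theorem linearIndependent_cols_iff_exists_det_submatrix_ne_zero (M : Matrix m n K) :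
    LinearIndependent K M.col ↔ ∃ f : n → m, (M.submatrix f id).det ≠ 0 := by
  constructor
  · intro hcols
    -- A maximal independent family of rows has `rank M = card n` members.
    obtain ⟨κ, a, ha, hspan, hrows⟩ := exists_linearIndependent' K M.row
    have : Fintype κ := Fintype.ofInjective a ha
    have hcard : Fintype.card κ = Fintype.card n := by
      rw [linearIndependent_iff_card_eq_finrank_span.mp hrows, Set.finrank, hspan,
        ← rank_eq_finrank_span_row, ← rank_transpose, LinearIndependent.rank_matrix]
      rwa [row_transpose]
    let e : n ≃ κ := (Fintype.equivOfCardEq hcard).symm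
    refine ⟨a ∘ e, ?_⟩
    have hunit : IsUnit (M.submatrix (a ∘ e) id) :=
      linearIndependent_rows_iff_isUnit.mp (hrows.comp e e.injective)
    exact ((isUnit_iff_isUnit_det _).mp hunit).ne_zero
  · rintro ⟨f, hf⟩
    have hunit : IsUnit (M.submatrix f id) := (isUnit_iff_isUnit_det _).mpr hf.isUnit
    exact LinearIndependent.of_comp (LinearMap.funLeft K K f)
      (linearIndependent_cols_iff_isUnit.mpr hunit)

theorem linearIndependent_cols_map_iff [CommRing R] (φ : R →+* K) (A : Matrix m n R) :
    LinearIndependent K (A.map φ).col ↔ ∃ f : n → m, φ (A.submatrix f id).det ≠ 0 := by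
  simp only [linearIndependent_cols_iff_exists_det_submatrix_ne_zero, RingHom.map_det]
  rfl

end Matrix

theorem ZMod.intCast_eq_zero_iff_of_abs_lt {q : ℕ} {d : ℤ} (hd : |d| < q) :
    (d : ZMod q) = 0 ↔ d = 0 :=
  ⟨fun h => Int.eq_zero_of_abs_lt_dvd ((ZMod.intCast_zmod_eq_zero_iff_dvd d q).mp h) hd,
    fun h => by rw [h, Int.cast_zero]⟩

theorem linearIndependent_iff_mod_q_general {m E : Type*} [Fintype m]
    (A : Matrix m E ℤ) (B : ℤ)
    (hB : ∀ (k : ℕ) (f : Fin k → m) (g : Fin k → E), |(A.submatrix f g).det| ≤ B)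
    (q : ℕ) (hq : q.Prime) (hqB : B < (q : ℤ)) (S : Finset E) :
    LinearIndependent ℚ (fun e : S => fun i : m => (A i e : ℚ)) ↔
      LinearIndependent (ZMod q) (fun e : S => fun i : m => ((A i e : ℤ) : ZMod q)) := by
  classical
  have : Fact q.Prime := ⟨hq⟩
  let AS : Matrix m S ℤ := A.submatrix id Subtype.val
  change LinearIndependent ℚ (AS.map (Int.castRingHom ℚ)).col ↔
    LinearIndependent (ZMod q) (AS.map (Int.castRingHom (ZMod q))).col
  rw [linearIndependent_cols_map_iff, linearIndependent_cols_map_iff]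
  refine exists_congr fun f => ?_
  have hminor : |(AS.submatrix f id).det| < q := by
    rw [← det_submatrix_equiv_self S.equivFin.symm, submatrix_submatrix]
    exact (hB _ _ _).trans_lt hqB
  simp only [eq_intCast, ne_eq, Int.cast_eq_zero, ZMod.intCast_eq_zero_iff_of_abs_lt hminor]

/-- Let `A` be an integer matrix all of whose square submatrices have determinant of
absolute value at most `B`, and let `q > B` be prime.  Then a set of columns of `A` is
linearly independent over `ℚ` iff its reduction mod `q` is linearly independent over
`F_q`; consequently the column matroid of `A` over `ℚ` equals that of its reduction. -/
theorem linearIndependent_iff_mod_q {m E : Type*} [Fintype m] [Fintype E]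
    (A : Matrix m E ℤ) (B : ℤ)
    (hB : ∀ (k : ℕ) (f : Fin k → m) (g : Fin k → E), |(A.submatrix f g).det| ≤ B)
    (q : ℕ) (hq : q.Prime) (hqB : B < (q : ℤ)) (S : Finset E) :
    LinearIndependent ℚ (fun e : S => fun i : m => (A i e : ℚ)) ↔
      LinearIndependent (ZMod q) (fun e : S => fun i : m => ((A i e : ℤ) : ZMod q)) :=
  linearIndependent_iff_mod_q_general A B hB q hq hqB S
end
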